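/- Let N ≥ 2 and let γ_{(s_1,…,s_N)}, s_n ∈ {1,2}, be the Mermin-Klyshko coefficients defined by γ_{(1,1)} = γ_{(1,2)} = γ_{(2,1)} = 1, γ_{(2,2)} = −1, and γ_{(s_1,…,s_{n-1},s_n)} = γ_{(s_1,…,s_{n-1})} + (δ_{s_n,1} − δ_{s_n,2}) γ_{(s̄_1,…,s̄_{n-1})} for 3 ≤ n ≤ N, where s̄ flips 1 ↔ 2. Let (Ω, μ) be a probability space and for each site n ∈ {1,…,N} let X_n^{(1)}, X_n^{(2)} : Ω → ℝ be measurable functions with |X_n^{(s)}(ω)| ≤ 1 for all ω. Then | ∑_{s_1,…,s_N ∈ {1,2}} γ_{(s_1,…,s_N)} ∫_Ω X_1^{(s_1)} ⋯ X_N^{(s_N)} dμ | ≤ 2^{N−1}. -/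

import Mathlib

/-!
The correlation sum is the integral of the Mermin-Klyshko polynomial
`M_N(x) = ∑ γ_s ∏ₙ xₙ^{(sₙ)}` evaluated at the outcomes, so it suffices to bound `M_N` pointwise
on `[-1,1]^{2N}`. The recursion for `γ` gives `M_{N+1} = M_N · (p + q) + M̄_N · (p - q)`, where
`p, q` are the outcomes at the new site and `M̄_N` is `M_N` with the two settings swapped at every
site. Since `|p + q| + |p - q| = 2 max(|p|, |q|) ≤ 2`, the bound doubles at each step, starting
from CHSH, `M_2 = a (b + b') + a' (b - b')`.
-/

open MeasureTheory

/-- The flip `1 ↔ 2` of a setting label (settings are `0`-indexed: `0` stands for the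
first setting and `1` for the second). -/
def flipSetting (s : Fin 2) : Fin 2 := if s = 0 then 1 else 0

/-- The Mermin-Klyshko coefficients `γ_{(s₁,…,s_N)}` for `N = m + 2` parties, settings
`0`-indexed: base case is the CHSH matrix `γ_{(1,1)} = γ_{(1,2)} = γ_{(2,1)} = 1`,
`γ_{(2,2)} = −1`; recursion
`γ_{(s₁,…,s_{n-1},s_n)} = γ_{(s₁,…,s_{n-1})} + (δ_{s_n,1} − δ_{s_n,2}) γ_{(s̄₁,…,s̄_{n-1})}`. -/
noncomputable def MKcoeff : (m : ℕ) → (Fin (m + 2) → Fin 2) → ℝ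
  | 0, s => if s 0 = 1 ∧ s 1 = 1 then -1 else 1
  | m + 1, s =>
      MKcoeff m (fun i => s i.castSucc) +
        (if s (Fin.last (m + 2)) = 0 then 1 else -1) *
          MKcoeff m (fun i => flipSetting (s i.castSucc))

lemma flipSetting_involutive : Function.Involutive flipSetting := by
  intro s; fin_cases s <;> rfl

noncomputable def mkPoly (m : ℕ) (x : Fin (m + 2) → Fin 2 → ℝ) : ℝ :=
  ∑ s : Fin (m + 2) → Fin 2, MKcoeff m s * ∏ n, x n (s n)

lemma sum_MKcoeff_flip_mul_prod (m : ℕ) (x : Fin (m + 2) → Fin 2 → ℝ) :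
    ∑ s : Fin (m + 2) → Fin 2, MKcoeff m (fun n => flipSetting (s n)) * ∏ n, x n (s n) =
      mkPoly m (fun n a => x n (flipSetting a)) :=
  Fintype.sum_bijective (fun s n => flipSetting (s n))
    (Function.Involutive.bijective fun s => funext fun n => flipSetting_involutive (s n)) _ _
    fun s => by simp only [flipSetting_involutive (s _)]

lemma mkPoly_zero (x : Fin 2 → Fin 2 → ℝ) :
    mkPoly 0 x = x 0 0 * (x 1 0 + x 1 1) + x 0 1 * (x 1 0 - x 1 1) := by
  rw [mkPoly, ← (finTwoArrowEquiv _).symm.sum_comp, Fintype.sum_prod_type]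
  simp only [MKcoeff, finTwoArrowEquiv_symm_apply, Nat.reduceAdd, Fin.prod_univ_two,
    Matrix.cons_val_zero, Matrix.cons_val_one, Matrix.cons_val_fin_one, Fin.sum_univ_two,
    zero_ne_one, and_false, and_true, ↓reduceIte]
  ring

lemma MKcoeff_succ_snoc_mul_prod (m : ℕ) (x : Fin (m + 3) → Fin 2 → ℝ) (s : Fin (m + 2) → Fin 2)
    (a : Fin 2) :
    MKcoeff (m + 1) (Fin.snoc s a) * ∏ n, x n (Fin.snoc (α := fun _ => Fin 2) s a n) =
      (MKcoeff m s + (if a = 0 then 1 else -1) * MKcoeff m (fun n => flipSetting (s n))) *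
        ((∏ n, x n.castSucc (s n)) * x (Fin.last _) a) := by
  rw [Fin.prod_univ_castSucc]
  simp only [MKcoeff, Fin.snoc_castSucc, Fin.snoc_last]

lemma mkPoly_succ (m : ℕ) (x : Fin (m + 3) → Fin 2 → ℝ) :
    mkPoly (m + 1) x =
      mkPoly m (fun n => x n.castSucc) * (x (Fin.last _) 0 + x (Fin.last _) 1) +
        mkPoly m (fun n a => x n.castSucc (flipSetting a)) *
          (x (Fin.last _) 0 - x (Fin.last _) 1) := by
  rw [mkPoly, ← (Fin.snocEquiv fun _ => Fin 2).sum_comp, Fintype.sum_prod_type, Fin.sum_univ_two,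
    ← sum_MKcoeff_flip_mul_prod, mkPoly]
  simp only [Fin.snocEquiv, Equiv.coe_fn_mk, MKcoeff_succ_snoc_mul_prod, Finset.sum_mul,
    ← Finset.sum_add_distrib]
  refine Finset.sum_congr rfl fun s _ => ?_
  simp only [↓reduceIte, one_ne_zero]
  ring

lemma abs_add_add_abs_sub_le_two {p q : ℝ} (hp : |p| ≤ 1) (hq : |q| ≤ 1) :
    |p + q| + |p - q| ≤ 2 := by
  rw [abs_le] at hp hq
  rcases abs_cases (p + q) with ⟨h₁, -⟩ | ⟨h₁, -⟩ <;>
    rcases abs_cases (p - q) with ⟨h₂, -⟩ | ⟨h₂, -⟩ <;> linarith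

lemma abs_mul_add_add_mul_sub_le {F G p q C : ℝ} (hF : |F| ≤ C) (hG : |G| ≤ C)
    (hp : |p| ≤ 1) (hq : |q| ≤ 1) : |F * (p + q) + G * (p - q)| ≤ 2 * C :=
  calc |F * (p + q) + G * (p - q)|
      ≤ |F| * |p + q| + |G| * |p - q| := by
        simpa only [abs_mul] using abs_add_le (F * (p + q)) (G * (p - q))
    _ ≤ C * |p + q| + C * |p - q| := by gcongr
    _ = C * (|p + q| + |p - q|) := by ring
    _ ≤ C * 2 := by
        gcongr
        · exact (abs_nonneg F).trans hF
        · exact abs_add_add_abs_sub_le_two hp hq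
    _ = 2 * C := mul_comm _ _

theorem abs_mkPoly_le (m : ℕ) (x : Fin (m + 2) → Fin 2 → ℝ) (hx : ∀ n s, |x n s| ≤ 1) :
    |mkPoly m x| ≤ 2 ^ (m + 1) := by
  induction m with
  | zero =>
    rw [mkPoly_zero]
    simpa using abs_mul_add_add_mul_sub_le (hx 0 0) (hx 0 1) (hx 1 0) (hx 1 1)
  | succ m ih =>
    rw [mkPoly_succ, pow_succ']
    exact abs_mul_add_add_mul_sub_le (ih _ fun n s => hx _ s) (ih _ fun n s => hx _ _)
      (hx _ 0) (hx _ 1)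

lemma integrable_prod_of_abs_le_one {Ω ι : Type*} [MeasurableSpace Ω] {μ : Measure Ω}
    [IsFiniteMeasure μ] (t : Finset ι) {f : ι → Ω → ℝ} (hf : ∀ i, Measurable (f i))
    (hbd : ∀ i ω, |f i ω| ≤ 1) : Integrable (fun ω => ∏ i ∈ t, f i ω) μ :=
  .of_bound (Finset.measurable_prod t fun i _ => hf i).aestronglyMeasurable 1 <|
    .of_forall fun ω => by
      rw [Real.norm_eq_abs, Finset.abs_prod]
      exact Finset.prod_le_one (fun i _ => abs_nonneg _) fun i _ => hbd i ω

/-- The Mermin-Klyshko inequality (58) for an LHV model `(Ω, μ)` with two measurable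
outcome maps `X n 0, X n 1 : Ω → [-1,1]` per site, `N = m + 2 ≥ 2` sites:
`|∑_{s₁,…,s_N} γ_{(s₁,…,s_N)} ∫ X₁^{(s₁)} ⋯ X_N^{(s_N)} dμ| ≤ 2^{N−1}`. -/
theorem stmt_11 {Ω : Type*} [MeasurableSpace Ω] (μ : Measure Ω) [IsProbabilityMeasure μ]
    (m : ℕ) (X : Fin (m + 2) → Fin 2 → Ω → ℝ)
    (hX : ∀ n s, Measurable (X n s))
    (hbd : ∀ n s ω, |X n s ω| ≤ 1) :
    |∑ s : Fin (m + 2) → Fin 2, MKcoeff m s * ∫ ω, ∏ n, X n (s n) ω ∂μ| ≤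
      2 ^ (m + 1) := by
  have hintegrable (s : Fin (m + 2) → Fin 2) : Integrable (fun ω => ∏ n, X n (s n) ω) μ :=
    integrable_prod_of_abs_le_one _ (fun n => hX n (s n)) fun n => hbd n (s n)
  have hsum : ∑ s : Fin (m + 2) → Fin 2, MKcoeff m s * ∫ ω, ∏ n, X n (s n) ω ∂μ =
      ∫ ω, mkPoly m (fun n s => X n s ω) ∂μ := by
    simp only [mkPoly, ← integral_const_mul]
    exact (integral_finsetSum _ fun s _ => (hintegrable s).const_mul _).symm
  rw [hsum, ← Real.norm_eq_abs]
  simpa using norm_integral_le_of_norm_le_const (μ := μ)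
    (.of_forall fun ω => (Real.norm_eq_abs _).trans_le (abs_mkPoly_le m _ fun n s => hbd n s ω))
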